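/- arXiv:0806.0400 — 2 statements merged into one kernel-verified Lean document; each statement's English description precedes it below -/
import Mathlib

section
/- Let g ∈ L¹(ℝ) be an even function (g(−x) = g(x) for all x), and let u : ℝ → ℝ be continuously differentiable with u and u' integrable and bounded and u(x) → 0 as |x| → ∞. Then ∫_ℝ (g ∗ u)(x) u'(x) dx = 0. -/
open MeasureTheory Filter Set Topology

/-- **Even-kernel orthogonality lemma.** Let `g ∈ L¹(ℝ)` be even, and let `u : ℝ → ℝ`
be continuously differentiable with `u` and `u'` integrable and bounded and
`u(x) → 0` as `|x| → ∞`. Then `∫ (g ∗ u)(x) u'(x) dx = 0`. -/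
theorem even_kernel_convolution_orthogonal_deriv
    (g : ℝ → ℝ) (hg : Integrable g) (heven : ∀ x, g (-x) = g x)
    (u : ℝ → ℝ) (hu : ContDiff ℝ 1 u)
    (huint : Integrable u) (hdint : Integrable (deriv u))
    (hubdd : ∃ C : ℝ, ∀ x, |u x| ≤ C) (hdbdd : ∃ C : ℝ, ∀ x, |deriv u x| ≤ C)
    (hulim : Tendsto u (cocompact ℝ) (nhds 0)) :
    ∫ x, (∫ y, g (x - y) * u y) * deriv u x = 0 := by
  obtain ⟨C, hC⟩ := hubdd
  have hucont : Continuous u := hu.continuous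
  have hudiff : Differentiable ℝ u := hu.differentiable one_ne_zero
  have hdcont : Continuous (deriv u) := hu.continuous_deriv le_rfl
  have hat : Tendsto u atTop (𝓝 0) :=
    hulim.mono_left (by rw [cocompact_eq_atBot_atTop]; exact le_sup_right)
  have habot : Tendsto u atBot (𝓝 0) :=
    hulim.mono_left (by rw [cocompact_eq_atBot_atTop]; exact le_sup_left)
  set A : ℝ → ℝ := fun z => ∫ x, u (x - z) * deriv u x with hAdef
  -- integrability facts
  have hAint : ∀ z : ℝ, Integrable (fun x => u (x - z) * deriv u x) := by
    intro z
    exact hdint.bdd_mul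
      ((hucont.comp (continuous_id.sub continuous_const)).aestronglyMeasurable)
      (Filter.Eventually.of_forall fun x => by simpa using hC (x - z))
  have hAint' : ∀ z : ℝ, Integrable (fun x => u x * deriv u (x - z)) := by
    intro z
    exact (hdint.comp_sub_right z).bdd_mul hucont.aestronglyMeasurable
      (Filter.Eventually.of_forall fun x => by simpa using hC x)
  -- FTC on the whole line: the integral of (u(x) u(x-z))' vanishes
  have key : ∀ z : ℝ, A z + (∫ x, u x * deriv u (x - z)) = 0 := by
    intro z
    have hF : ∀ x : ℝ, HasDerivAt (fun x => u x * u (x - z))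
        (u (x - z) * deriv u x + u x * deriv u (x - z)) x := by
      intro x
      have h1 : HasDerivAt u (deriv u x) x := (hudiff x).hasDerivAt
      have h2 : HasDerivAt (fun x => u (x - z)) (deriv u (x - z)) x := by
        have h := (hudiff (x - z)).hasDerivAt.comp x ((hasDerivAt_id x).sub_const z)
        rw [mul_one] at h
        exact h
      have := h1.mul h2
      rw [show (u (x - z) * deriv u x + u x * deriv u (x - z)) = deriv u x * u (x - z) + u x * deriv u (x - z) by ring]
      exact this
    have hsubTop : Tendsto (fun x : ℝ => x - z) atTop atTop := by
      simpa [sub_eq_add_neg] using tendsto_atTop_add_const_right atTop (-z) tendsto_id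
    have hsubBot : Tendsto (fun x : ℝ => x - z) atBot atBot := by
      simpa [sub_eq_add_neg] using tendsto_atBot_add_const_right atBot (-z) tendsto_id
    have hFtop : Tendsto (fun x => u x * u (x - z)) atTop (𝓝 0) := by
      simpa using hat.mul (hat.comp hsubTop)
    have hFbot : Tendsto (fun x => u x * u (x - z)) atBot (𝓝 0) := by
      simpa using habot.mul (habot.comp hsubBot)
    have hint : Integrable (fun x => u (x - z) * deriv u x + u x * deriv u (x - z)) :=
      (hAint z).add (hAint' z)
    have h1 : ∫ x in Ioi (0 : ℝ), (u (x - z) * deriv u x + u x * deriv u (x - z))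
        = 0 - u 0 * u (0 - z) :=
      integral_Ioi_of_hasDerivAt_of_tendsto' (fun x _ => hF x) hint.integrableOn hFtop
    have h2 : ∫ x in Iic (0 : ℝ), (u (x - z) * deriv u x + u x * deriv u (x - z))
        = u 0 * u (0 - z) - 0 :=
      integral_Iic_of_hasDerivAt_of_tendsto' (fun x _ => hF x) hint.integrableOn hFbot
    have hsum : ∫ x, (u (x - z) * deriv u x + u x * deriv u (x - z)) = 0 := by
      rw [← intervalIntegral.integral_Iic_add_Ioi (b := (0 : ℝ)) hint.integrableOn hint.integrableOn, h1, h2]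
      ring
    rw [hAdef, ← integral_add (hAint z) (hAint' z)]
    exact hsum
  -- A is odd
  have hAneg : ∀ z : ℝ, A (-z) = ∫ x, u x * deriv u (x - z) := by
    intro z
    have hshift := integral_add_right_eq_self (μ := volume)
      (fun x => u x * deriv u (x - z)) z
    have : A (-z) = ∫ x, u (x + z) * deriv u x := by
      simp [A, sub_neg_eq_add]
    rw [this, ← hshift]
    congr 1
    funext x
    simp
  have hAodd : ∀ z : ℝ, A (-z) = -A z := by
    intro z
    have := key z
    rw [hAneg z]
    linarith
  -- rewrite the convolution using translation invariance
  have hconv : ∀ x : ℝ, (∫ y, g (x - y) * u y) = ∫ z, g z * u (x - z) := by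
    intro x
    have := integral_sub_left_eq_self (μ := volume) (fun t => g t * u (x - t)) x
    simpa using this
  -- product integrability for Fubini
  have hgm : AEStronglyMeasurable g volume := hg.aestronglyMeasurable
  have huncur : Integrable (fun p : ℝ × ℝ => g p.2 * u (p.1 - p.2) * deriv u p.1)
      (volume.prod volume) := by
    have hmeas : AEStronglyMeasurable (fun p : ℝ × ℝ => g p.2 * u (p.1 - p.2) * deriv u p.1)
        (volume.prod volume) := by
      refine (AEStronglyMeasurable.mul ?_ ?_).mul ?_
      · exact hgm.comp_snd
      · exact (hucont.comp (continuous_fst.sub continuous_snd)).aestronglyMeasurable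
      · exact (hdcont.comp continuous_fst).aestronglyMeasurable
    have hbound : Integrable (fun p : ℝ × ℝ => (C * |deriv u p.1|) * |g p.2|)
        (volume.prod volume) := (hdint.abs.const_mul C).mul_prod hg.abs
    refine hbound.mono' hmeas ?_
    refine Filter.Eventually.of_forall fun p => ?_
    have h1 : |u (p.1 - p.2)| ≤ C := hC _
    have h2 : (0 : ℝ) ≤ |g p.2| := abs_nonneg _
    have h3 : (0 : ℝ) ≤ |deriv u p.1| := abs_nonneg _
    calc ‖g p.2 * u (p.1 - p.2) * deriv u p.1‖
        = |g p.2| * |u (p.1 - p.2)| * |deriv u p.1| := by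
          simp [Real.norm_eq_abs, abs_mul]
      _ ≤ |g p.2| * C * |deriv u p.1| := by
          have := mul_le_mul_of_nonneg_left h1 h2
          exact mul_le_mul_of_nonneg_right this h3
      _ = C * |deriv u p.1| * |g p.2| := by ring
  -- main computation
  have hI : ∫ x, (∫ y, g (x - y) * u y) * deriv u x = ∫ z, g z * A z := by
    calc ∫ x, (∫ y, g (x - y) * u y) * deriv u x
        = ∫ x, ∫ z, g z * u (x - z) * deriv u x := by
          congr 1
          funext x
          rw [hconv x, ← integral_mul_const]
      _ = ∫ z, ∫ x, g z * u (x - z) * deriv u x := integral_integral_swap huncur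
      _ = ∫ z, g z * A z := by
          congr 1
          funext z
          rw [hAdef]
          rw [← integral_const_mul]
          congr 1
          funext x
          ring
  have hrefl : ∫ z, g z * A z = -∫ z, g z * A z := by
    conv_lhs => rw [← integral_neg_eq_self (fun z => g z * A z) volume]
    have : (fun z => g (-z) * A (-z)) = fun z => -(g z * A z) := by
      funext z
      rw [heven z, hAodd z]
      ring
    rw [show (∫ z, g (-z) * A (-z)) = ∫ z, -(g z * A z) from by rw [this]]
    exact integral_neg _
  rw [hI]
  linarith [hrefl]
end

section
/- Let g ∈ L¹(ℝ) ∩ C⁰(ℝ) with g ≥ 0, g even, ∫_ℝ g = 1, and set g^α(x) = (1/α)g(x/α) for α > 0. Let u_l, u_r ∈ ℝ, c = (u_l+u_r)/2, u(x,t) = u_l for x < ct and u_r for x ≥ ct, and ū(x,t) = (u_r − u_l)∫_{−∞}^{x−ct} g^α(s) ds + u_l. Then the pair (u, ū) is a weak solution of the one-dimensional CFB equation u_t + ū u_x = 0: for every test function φ ∈ C_c^∞(ℝ × (0,∞)), ∫₀^∞ ∫_ℝ [ u ∂_tφ + ū u ∂_xφ + (∂_x ū) u φ ] dx dt = 0,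 where ∂_x ū(x,t) = (u_r − u_l) g^α(x − ct). -/
open MeasureTheory Filter Set Topology

/-- The filter scaled to characteristic wavelength `α`: `g^α(x) = (1/α) g(x/α)`. -/
noncomputable def scaledFilter (g : ℝ → ℝ) (α : ℝ) (x : ℝ) : ℝ :=
  (1 / α) * g (x / α)

/-- bounded measurable times continuous compactly supported is integrable -/
lemma integrable_bdd_mul {f k : ℝ → ℝ} (hf : Measurable f) (M : ℝ)
    (hM : ∀ y, |f y| ≤ M) (hk : Continuous k) (hks : HasCompactSupport k) :
    Integrable (fun y => f y * k y) := by
  have hki : Integrable k := hk.integrable_of_hasCompactSupport hks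
  refine Integrable.mono' (g := fun y => M * |k y|) ((hki.abs).const_mul M)
    ((hf.mul hk.measurable).aestronglyMeasurable) ?_
  filter_upwards with y
  rw [Real.norm_eq_abs, abs_mul]
  exact mul_le_mul_of_nonneg_right (hM y) (abs_nonneg _)

lemma sf_int {g : ℝ → ℝ} (hg : Integrable g) {α : ℝ} (hα : 0 < α) :
    Integrable (scaledFilter g α) :=
  (hg.comp_div hα.ne').const_mul _

lemma sf_tot {g : ℝ → ℝ} (hg : Integrable g) (hnorm : (∫ x, g x) = 1)
    {α : ℝ} (hα : 0 < α) : (∫ x, scaledFilter g α x) = 1 := by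
  have : (∫ x, scaledFilter g α x) = (1/α) * ∫ x, g (x / α) := by
    simpa [scaledFilter] using integral_const_mul (1/α) (fun x => g (x/α))
  rw [this, Measure.integral_comp_div g α, hnorm, abs_of_pos hα]
  simp [smul_eq_mul]
  field_simp

lemma sf_cont {g : ℝ → ℝ} (hgc : Continuous g) {α : ℝ} (hα : 0 < α) :
    Continuous (scaledFilter g α) := by
  exact continuous_const.mul (hgc.comp (continuous_id.div_const α))

lemma sf_half {g : ℝ → ℝ} (hg : Integrable g) (heven : ∀ x, g (-x) = g x)
    (hnorm : (∫ x, g x) = 1) {α : ℝ} (hα : 0 < α) :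
    (∫ x in Iic (0:ℝ), scaledFilter g α x) = 1/2 := by
  have hint := sf_int hg hα
  have h1 : (∫ x in Iic (0:ℝ), scaledFilter g α x) = ∫ x in Ioi (0:ℝ), scaledFilter g α x := by
    have := integral_comp_neg_Iic (0:ℝ) (scaledFilter g α)
    rw [neg_zero] at this
    rw [← this]
    refine setIntegral_congr_fun measurableSet_Iic (fun x _ => ?_)
    simp [scaledFilter, neg_div, heven]
  have h2 : (∫ x in Iic (0:ℝ), scaledFilter g α x) + (∫ x in Ioi (0:ℝ), scaledFilter g α x) = 1 := by
    rw [intervalIntegral.integral_Iic_add_Ioi hint.integrableOn hint.integrableOn,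
      sf_tot hg hnorm hα]
  linarith [h1, h2]

lemma G_hasDeriv {g : ℝ → ℝ} (hg : Integrable g) (hgc : Continuous g) {α : ℝ} (hα : 0 < α)
    (y : ℝ) :
    HasDerivAt (fun y => ∫ s in Iic y, scaledFilter g α s) (scaledFilter g α y) y := by
  have hint := sf_int hg hα
  have hfun : (fun y => ∫ s in Iic y, scaledFilter g α s)
      = fun y => (∫ s in (0:ℝ)..y, scaledFilter g α s) + ∫ s in Iic (0:ℝ), scaledFilter g α s := by
    funext y
    rw [← intervalIntegral.integral_Iic_sub_Iic hint.integrableOn hint.integrableOn]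
    ring
  rw [hfun]
  exact (intervalIntegral.integral_hasDerivAt_right hint.intervalIntegrable
    ((sf_cont hgc hα).stronglyMeasurableAtFilter _ _)
    (sf_cont hgc hα).continuousAt).add_const _

lemma hcs_line {k : ℝ × ℝ → ℝ} (hks : HasCompactSupport k) (b t : ℝ) :
    HasCompactSupport (fun y => k (y + b, t)) := by
  apply HasCompactSupport.intro (K := (fun p : ℝ × ℝ => p.1 - b) '' tsupport k)
    (hks.image (continuous_fst.sub continuous_const))
  intro y hy
  by_contra h
  exact hy ⟨(y + b, t), subset_tsupport _ h, by simp⟩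

lemma hcs_time {k : ℝ × ℝ → ℝ} (hks : HasCompactSupport k) (y c : ℝ) :
    HasCompactSupport (fun s => k (y + c * s, s)) := by
  apply HasCompactSupport.intro (K := Prod.snd '' tsupport k) (hks.image continuous_snd)
  intro s hs
  by_contra h
  exact hs ⟨(y + c * s, s), subset_tsupport _ h, rfl⟩

lemma hcs_skew {k : ℝ × ℝ → ℝ} (hks : HasCompactSupport k) (c : ℝ) :
    HasCompactSupport (fun q : ℝ × ℝ => k (q.2 + c * q.1, q.1)) := by
  apply HasCompactSupport.intro (K := (fun p : ℝ × ℝ => (p.2, p.1 - c * p.2)) '' tsupport k)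
    (hks.image (continuous_snd.prodMk (continuous_fst.sub (continuous_const.mul continuous_snd))))
  intro q hq
  by_contra h
  refine hq ⟨(q.2 + c * q.1, q.1), subset_tsupport _ h, by simp⟩

lemma tendsto_mul_hcs_zero {f k : ℝ → ℝ} (hk : HasCompactSupport k) {l : Filter ℝ}
    (hl : l ≤ Filter.cocompact ℝ) : Tendsto (fun y => f y * k y) l (𝓝 0) := by
  have h := hasCompactSupport_iff_eventuallyEq.1 hk
  rw [Filter.coclosedCompact_eq_cocompact] at h
  have h2 : (fun y => f y * k y) =ᶠ[l] 0 := by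
    filter_upwards [h.filter_mono hl] with y hy
    simp only [Pi.zero_apply] at hy ⊢
    simp [hy]
  exact Tendsto.congr' h2.symm tendsto_const_nhds

lemma hcs_scale_mul {k : ℝ → ℝ} (hk : HasCompactSupport k) (f : ℝ → ℝ) :
    HasCompactSupport (fun y => f y * k y) := by
  refine HasCompactSupport.intro hk fun y hy => ?_
  rw [image_eq_zero_of_notMem_tsupport hy, mul_zero]

/-- **The traveling step is a weak solution of 1D CFB.** Let `g ∈ L¹(ℝ) ∩ C⁰(ℝ)` with
`g ≥ 0`, `g` even, `∫ g = 1`, and `g^α(x) = (1/α)g(x/α)` for `α > 0`. Let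
`c = (u_l+u_r)/2`, `u(x,t) = u_l` for `x < ct` and `u_r` for `x ≥ ct`, and
`ū(x,t) = (u_r − u_l)∫_{−∞}^{x−ct} g^α(s) ds + u_l`. Then for every test function
`φ ∈ C_c^∞(ℝ × (0,∞))`,
`∫₀^∞ ∫ [ u ∂_tφ + ū u ∂_xφ + (∂_x ū) u φ ] dx dt = 0`,
where `∂_x ū(x,t) = (u_r − u_l) g^α(x − ct)`. -/
theorem cfb_traveling_wave_weak_solution
    (g : ℝ → ℝ) (hg : Integrable g) (hgc : Continuous g) (hpos : ∀ x, 0 ≤ g x)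
    (heven : ∀ x, g (-x) = g x) (hnorm : (∫ x, g x) = 1)
    (α : ℝ) (hα : 0 < α)
    (ul ur c : ℝ) (hc : c = (ul + ur) / 2)
    (u ub : ℝ → ℝ → ℝ)
    (hu : ∀ x t : ℝ, u x t = if x < c * t then ul else ur)
    (hub : ∀ x t : ℝ,
      ub x t = (ur - ul) * (∫ s in Set.Iic (x - c * t), scaledFilter g α s) + ul) :
    ∀ φ : ℝ × ℝ → ℝ, ContDiff ℝ (⊤ : ℕ∞) φ → HasCompactSupport φ →
      tsupport φ ⊆ {p : ℝ × ℝ | 0 < p.2} →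
      (∫ t in Set.Ioi (0:ℝ), ∫ x : ℝ,
        (u x t * fderiv ℝ φ (x, t) (0, 1)
          + ub x t * u x t * fderiv ℝ φ (x, t) (1, 0)
          + (ur - ul) * scaledFilter g α (x - c * t) * u x t * φ (x, t))) = 0 := by
  intro φ hφ h2φ hsupp
  set gα : ℝ → ℝ := scaledFilter g α with hgα
  have hgαc : Continuous gα := sf_cont hgc hα
  have hgαi : Integrable gα := sf_int hg hα
  -- the profile functions
  set U : ℝ → ℝ := fun y => if y < 0 then ul else ur with hUdef
  set G : ℝ → ℝ := fun y => ∫ s in Iic y, gα s with hGdef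
  set B : ℝ → ℝ := fun y => (ur - ul) * G y + ul with hBdef
  have hB0 : B 0 = c := by
    simp only [hBdef, hGdef, hgα]
    rw [sf_half hg heven hnorm hα, hc]; ring
  have hGd : ∀ y, HasDerivAt G (gα y) y := G_hasDeriv hg hgc hα
  have hGc : Continuous G := continuous_iff_continuousAt.2 fun y => (hGd y).continuousAt
  have hBd : ∀ y, HasDerivAt B ((ur - ul) * gα y) y := fun y =>
    ((hGd y).const_mul _).add_const _
  have hBc : Continuous B := (continuous_const.mul hGc).add continuous_const
  have hUmeas : Measurable U := Measurable.ite measurableSet_Iio measurable_const measurable_const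
  set MU : ℝ := max |ul| |ur| with hMU
  have hUbd : ∀ y, |U y| ≤ MU := by
    intro y; simp only [hUdef]
    split
    · exact le_max_left _ _
    · exact le_max_right _ _
  -- facts about φ
  have hφd : Differentiable ℝ φ := hφ.differentiable (by simp)
  have hDc : ∀ v : ℝ × ℝ, Continuous (fun p => fderiv ℝ φ p v) :=
    fun v => (hφ.continuous_fderiv (by simp)).clm_apply continuous_const
  have hDs : ∀ v : ℝ × ℝ, HasCompactSupport (fun p => fderiv ℝ φ p v) :=
    fun v => h2φ.fderiv_apply ℝ v
  -- derivatives of φ along lines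
  have hlineD : ∀ t y : ℝ, HasDerivAt (fun y => φ (y + c * t, t))
      (fderiv ℝ φ (y + c * t, t) (1, 0)) y := by
    intro t y
    have hl : HasDerivAt (fun y : ℝ => ((y + c * t : ℝ), t)) ((1 : ℝ), (0 : ℝ)) y :=
      ((hasDerivAt_id y).add_const _).prodMk (hasDerivAt_const y t)
    exact (hφd _).hasFDerivAt.comp_hasDerivAt y hl
  have htimeD : ∀ y s : ℝ, HasDerivAt (fun s => φ (y + c * s, s))
      (fderiv ℝ φ (y + c * s, s) (c, 1)) s := by
    intro y s
    have hl : HasDerivAt (fun s : ℝ => ((y + c * s : ℝ), s)) ((c : ℝ), (1 : ℝ)) s :=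
      by simpa using (((hasDerivAt_id s).const_mul c).const_add y).prodMk (hasDerivAt_id s)
    exact (hφd _).hasFDerivAt.comp_hasDerivAt s hl
  have hvec : ∀ p : ℝ × ℝ, fderiv ℝ φ p ((c : ℝ), (1 : ℝ))
      = fderiv ℝ φ p ((0 : ℝ), (1 : ℝ)) + c * fderiv ℝ φ p ((1 : ℝ), (0 : ℝ)) := by
    intro p
    have : ((c : ℝ), (1 : ℝ)) = ((0 : ℝ), (1 : ℝ)) + c • ((1 : ℝ), (0 : ℝ)) := by
      simp
    rw [this, map_add, (fderiv ℝ φ p).map_smul, smul_eq_mul]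
  -- step 1 : the inner integral at each time
  have key1 : ∀ t : ℝ, (∫ x : ℝ,
        (u x t * fderiv ℝ φ (x, t) (0, 1)
          + ub x t * u x t * fderiv ℝ φ (x, t) (1, 0)
          + (ur - ul) * scaledFilter g α (x - c * t) * u x t * φ (x, t)))
      = ∫ y : ℝ, U y * fderiv ℝ φ (y + c * t, t) (c, 1) := by
    intro t
    -- continuity/support facts for the shifted functions
    have hlc : Continuous (fun y : ℝ => ((y + c * t : ℝ), t)) :=
      (continuous_id.add continuous_const).prodMk continuous_const
    have hφlc : Continuous (fun y : ℝ => φ (y + c * t, t)) := hφ.continuous.comp hlc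
    have hφls : HasCompactSupport (fun y : ℝ => φ (y + c * t, t)) := hcs_line h2φ (c * t) t
    have hD10c : Continuous (fun y : ℝ => fderiv ℝ φ (y + c * t, t) (1, 0)) :=
      (hDc (1, 0)).comp hlc
    have hD10s : HasCompactSupport (fun y : ℝ => fderiv ℝ φ (y + c * t, t) (1, 0)) :=
      hcs_line (hDs (1, 0)) (c * t) t
    have hDc1c : Continuous (fun y : ℝ => fderiv ℝ φ (y + c * t, t) (c, 1)) :=
      (hDc (c, 1)).comp hlc
    have hDc1s : HasCompactSupport (fun y : ℝ => fderiv ℝ φ (y + c * t, t) (c, 1)) :=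
      hcs_line (hDs (c, 1)) (c * t) t
    -- bounds for B
    have hGbd : ∀ y, 0 ≤ G y ∧ G y ≤ 1 := by
      intro y
      constructor
      · refine setIntegral_nonneg measurableSet_Iic fun s _ => ?_
        simp only [hgα, scaledFilter]
        exact mul_nonneg (by positivity) (hpos _)
      · calc (∫ s in Iic y, gα s) ≤ ∫ s, gα s := by
              refine setIntegral_le_integral hgαi ?_
              filter_upwards with s
              simp only [Pi.zero_apply, hgα, scaledFilter]
              exact mul_nonneg (by positivity) (hpos _)
          _ = 1 := sf_tot hg hnorm hα
    set M2 : ℝ := |ur - ul| + |ul| + |c| with hM2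
    have hBbd : ∀ y, |B y - c| ≤ M2 := by
      intro y
      have h1 : |B y| ≤ |ur - ul| + |ul| := by
        simp only [hBdef]
        calc |(ur - ul) * G y + ul| ≤ |(ur - ul) * G y| + |ul| := abs_add_le _ _
          _ ≤ |ur - ul| + |ul| := by
              rw [abs_mul]
              have := hGbd y
              have : |G y| ≤ 1 := by rw [abs_of_nonneg this.1]; exact this.2
              nlinarith [abs_nonneg (ur - ul), abs_nonneg (G y)]
      calc |B y - c| ≤ |B y| + |c| := by
            rw [sub_eq_add_neg]
            exact (abs_add_le _ _).trans (by rw [abs_neg])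
        _ ≤ M2 := by rw [hM2]; linarith
    -- integrability of the pieces
    have int1 : Integrable (fun y : ℝ => U y * fderiv ℝ φ (y + c * t, t) (c, 1)) :=
      integrable_bdd_mul hUmeas MU hUbd hDc1c hDc1s
    have intA : Integrable (fun y : ℝ => (B y - c) * U y * fderiv ℝ φ (y + c * t, t) (1, 0)) := by
      refine integrable_bdd_mul ((hBc.measurable.sub measurable_const).mul hUmeas)
        (M2 * MU) (fun y => ?_) hD10c hD10s
      rw [abs_mul]
      exact mul_le_mul (hBbd y) (hUbd y) (abs_nonneg _) (le_trans (abs_nonneg _) (hBbd 0))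
    have intB : Integrable (fun y : ℝ => (ur - ul) * gα y * U y * φ (y + c * t, t)) := by
      have heq : (fun y : ℝ => (ur - ul) * gα y * U y * φ (y + c * t, t))
          = fun y : ℝ => U y * ((ur - ul) * gα y * φ (y + c * t, t)) := by
        funext y; ring
      rw [heq]
      refine integrable_bdd_mul hUmeas MU hUbd
        ((continuous_const.mul hgαc).mul hφlc) ?_
      exact hcs_scale_mul hφls _
    have int2 : Integrable (fun y : ℝ => (B y - c) * U y * fderiv ℝ φ (y + c * t, t) (1, 0)
        + (ur - ul) * gα y * U y * φ (y + c * t, t)) := intA.add intB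
    -- change of variables x = y + c t
    rw [← integral_add_right_eq_self (fun x : ℝ =>
      (u x t * fderiv ℝ φ (x, t) (0, 1)
        + ub x t * u x t * fderiv ℝ φ (x, t) (1, 0)
        + (ur - ul) * scaledFilter g α (x - c * t) * u x t * φ (x, t))) (c * t)]
    have hre : ∀ y : ℝ,
        (u (y + c * t) t * fderiv ℝ φ (y + c * t, t) (0, 1)
          + ub (y + c * t) t * u (y + c * t) t * fderiv ℝ φ (y + c * t, t) (1, 0)
          + (ur - ul) * scaledFilter g α (y + c * t - c * t) * u (y + c * t) t * φ (y + c * t, t))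
        = U y * fderiv ℝ φ (y + c * t, t) (c, 1)
          + ((B y - c) * U y * fderiv ℝ φ (y + c * t, t) (1, 0)
            + (ur - ul) * gα y * U y * φ (y + c * t, t)) := by
      intro y
      have harg : y + c * t - c * t = y := add_sub_cancel_right y (c * t)
      rw [hu, hub, harg, hvec]
      have hU' : (if y + c * t < c * t then ul else ur) = U y := by
        have hiff : y + c * t < c * t ↔ y < 0 := by constructor <;> intro h <;> linarith
        simp only [hUdef, hiff]
      rw [hU']
      simp only [hBdef, hgα]
      ring
    rw [integral_congr_ae (Filter.Eventually.of_forall hre)]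
    rw [integral_add int1 int2]
    -- the integration-by-parts term vanishes
    have hFTC : (∫ y : ℝ, ((B y - c) * U y * fderiv ℝ φ (y + c * t, t) (1, 0)
        + (ur - ul) * gα y * U y * φ (y + c * t, t))) = 0 := by
      have hne : ∀ᵐ y : ℝ, y ≠ (0:ℝ) := by
        rw [ae_iff]
        simp only [ne_eq, not_not, setOf_eq_eq_singleton]
        exact measure_singleton 0
      have hIic : (∫ y in Iic (0:ℝ), ((B y - c) * U y * fderiv ℝ φ (y + c * t, t) (1, 0)
          + (ur - ul) * gα y * U y * φ (y + c * t, t))) = 0 := by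
        have hld : ∀ y : ℝ, HasDerivAt (fun y => (B y - c) * (ul * φ (y + c * t, t)))
            ((ur - ul) * gα y * (ul * φ (y + c * t, t))
              + (B y - c) * (ul * fderiv ℝ φ (y + c * t, t) (1, 0))) y := by
          intro y
          have h := ((hBd y).sub_const c).mul ((hlineD t y).const_mul ul)
          convert h using 1
          all_goals rfl
        have hl'c : Continuous (fun y : ℝ => (ur - ul) * gα y * (ul * φ (y + c * t, t))
            + (B y - c) * (ul * fderiv ℝ φ (y + c * t, t) (1, 0))) :=
          ((continuous_const.mul hgαc).mul (continuous_const.mul hφlc)).add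
            ((hBc.sub continuous_const).mul (continuous_const.mul hD10c))
        have hl's : HasCompactSupport (fun y : ℝ => (ur - ul) * gα y * (ul * φ (y + c * t, t))
            + (B y - c) * (ul * fderiv ℝ φ (y + c * t, t) (1, 0))) := by
          apply HasCompactSupport.add
          · exact hcs_scale_mul (hcs_scale_mul hφls fun _ => ul) _
          · exact hcs_scale_mul (hcs_scale_mul hD10s fun _ => ul) _
        have hl'int : IntegrableOn (fun y : ℝ => (ur - ul) * gα y * (ul * φ (y + c * t, t))
            + (B y - c) * (ul * fderiv ℝ φ (y + c * t, t) (1, 0))) (Iic 0) :=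
          (hl'c.integrable_of_hasCompactSupport hl's).integrableOn
        have hcontl : Continuous (fun y : ℝ => (B y - c) * (ul * φ (y + c * t, t))) :=
          (hBc.sub continuous_const).mul (continuous_const.mul hφlc)
        have hltend : Tendsto (fun y : ℝ => (B y - c) * (ul * φ (y + c * t, t)))
            atBot (𝓝 0) :=
          tendsto_mul_hcs_zero (f := fun y => B y - c)
            (hcs_scale_mul hφls fun _ => ul) atBot_le_cocompact
        have hres := integral_Iic_of_hasDerivAt_of_tendsto (a := (0:ℝ))
          hcontl.continuousWithinAt (fun y _ => hld y) hl'int hltend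
        have hcongr : ∀ᵐ y : ℝ, y ∈ Iic (0:ℝ) →
            ((B y - c) * U y * fderiv ℝ φ (y + c * t, t) (1, 0)
              + (ur - ul) * gα y * U y * φ (y + c * t, t))
            = ((ur - ul) * gα y * (ul * φ (y + c * t, t))
              + (B y - c) * (ul * fderiv ℝ φ (y + c * t, t) (1, 0))) := by
          filter_upwards [hne] with y hy hmem
          have hy0 : y < 0 := lt_of_le_of_ne hmem hy
          have hUy : U y = ul := by simp [hUdef, hy0]
          rw [hUy]; ring
        rw [setIntegral_congr_ae measurableSet_Iic hcongr, hres]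
        simp [hB0]
      have hIoi : (∫ y in Ioi (0:ℝ), ((B y - c) * U y * fderiv ℝ φ (y + c * t, t) (1, 0)
          + (ur - ul) * gα y * U y * φ (y + c * t, t))) = 0 := by
        have hld : ∀ y : ℝ, HasDerivAt (fun y => (B y - c) * (ur * φ (y + c * t, t)))
            ((ur - ul) * gα y * (ur * φ (y + c * t, t))
              + (B y - c) * (ur * fderiv ℝ φ (y + c * t, t) (1, 0))) y := by
          intro y
          have h := ((hBd y).sub_const c).mul ((hlineD t y).const_mul ur)
          convert h using 1
          all_goals rfl
        have hl'c : Continuous (fun y : ℝ => (ur - ul) * gα y * (ur * φ (y + c * t, t))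
            + (B y - c) * (ur * fderiv ℝ φ (y + c * t, t) (1, 0))) :=
          ((continuous_const.mul hgαc).mul (continuous_const.mul hφlc)).add
            ((hBc.sub continuous_const).mul (continuous_const.mul hD10c))
        have hl's : HasCompactSupport (fun y : ℝ => (ur - ul) * gα y * (ur * φ (y + c * t, t))
            + (B y - c) * (ur * fderiv ℝ φ (y + c * t, t) (1, 0))) := by
          apply HasCompactSupport.add
          · exact hcs_scale_mul (hcs_scale_mul hφls fun _ => ur) _
          · exact hcs_scale_mul (hcs_scale_mul hD10s fun _ => ur) _
        have hl'int : IntegrableOn (fun y : ℝ => (ur - ul) * gα y * (ur * φ (y + c * t, t))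
            + (B y - c) * (ur * fderiv ℝ φ (y + c * t, t) (1, 0))) (Ioi 0) :=
          (hl'c.integrable_of_hasCompactSupport hl's).integrableOn
        have hcontl : Continuous (fun y : ℝ => (B y - c) * (ur * φ (y + c * t, t))) :=
          (hBc.sub continuous_const).mul (continuous_const.mul hφlc)
        have hltend : Tendsto (fun y : ℝ => (B y - c) * (ur * φ (y + c * t, t)))
            atTop (𝓝 0) :=
          tendsto_mul_hcs_zero (f := fun y => B y - c)
            (hcs_scale_mul hφls fun _ => ur) atTop_le_cocompact
        have hres := integral_Ioi_of_hasDerivAt_of_tendsto (a := (0:ℝ))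
          hcontl.continuousWithinAt (fun y _ => hld y) hl'int hltend
        have hcongr : ∀ y ∈ Ioi (0:ℝ),
            ((B y - c) * U y * fderiv ℝ φ (y + c * t, t) (1, 0)
              + (ur - ul) * gα y * U y * φ (y + c * t, t))
            = ((ur - ul) * gα y * (ur * φ (y + c * t, t))
              + (B y - c) * (ur * fderiv ℝ φ (y + c * t, t) (1, 0))) := by
          intro y hy
          have hUy : U y = ur := by
            simp only [hUdef]
            rw [if_neg (not_lt.2 (le_of_lt hy))]
          rw [hUy]; ring
        rw [setIntegral_congr_fun measurableSet_Ioi hcongr, hres]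
        simp [hB0]
      rw [← intervalIntegral.integral_Iic_add_Ioi int2.integrableOn int2.integrableOn,
        hIic, hIoi, add_zero]
    rw [hFTC, add_zero]
  rw [setIntegral_congr_fun measurableSet_Ioi (fun t _ => key1 t)]
  -- step 2 : Fubini and integration in time
  set K : ℝ × ℝ → ℝ := fun q => fderiv ℝ φ (q.2 + c * q.1, q.1) (c, 1) with hK
  have hKc : Continuous K := (hDc (c, 1)).comp
    ((continuous_snd.add (continuous_const.mul continuous_fst)).prodMk continuous_fst)
  have hKs : HasCompactSupport K := hcs_skew (hDs (c, 1)) c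
  have hKint : Integrable K := hKc.integrable_of_hasCompactSupport hKs
  have hmeq : (volume.restrict (Ioi (0:ℝ))).prod (volume : Measure ℝ)
      = ((volume : Measure (ℝ × ℝ))).restrict ((Ioi 0) ×ˢ univ) := by
    rw [Measure.volume_eq_prod, ← Measure.prod_restrict, Measure.restrict_univ]
  have hprod : Integrable
      (Function.uncurry fun t y => U y * fderiv ℝ φ (y + c * t, t) (c, 1))
      ((volume.restrict (Ioi (0:ℝ))).prod volume) := by
    rw [hmeq]
    refine Integrable.mono' ((hKint.abs.const_mul MU).restrict)
      (((hUmeas.comp measurable_snd).mul hKc.measurable).aestronglyMeasurable) ?_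
    filter_upwards with q
    show ‖U q.2 * K q‖ ≤ MU * |K q|
    rw [Real.norm_eq_abs, abs_mul]
    exact mul_le_mul_of_nonneg_right (hUbd q.2) (abs_nonneg _)
  rw [MeasureTheory.integral_integral_swap hprod]
  have inner0 : ∀ y : ℝ, (∫ t in Ioi (0:ℝ), fderiv ℝ φ (y + c * t, t) (c, 1)) = 0 := by
    intro y
    have hcont : Continuous (fun s : ℝ => φ (y + c * s, s)) := hφ.continuous.comp
      ((continuous_const.add (continuous_const.mul continuous_id)).prodMk continuous_id)
    have hkc : Continuous (fun s : ℝ => fderiv ℝ φ (y + c * s, s) (c, 1)) :=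
      (hDc (c, 1)).comp
        ((continuous_const.add (continuous_const.mul continuous_id)).prodMk continuous_id)
    have hks : HasCompactSupport (fun s : ℝ => fderiv ℝ φ (y + c * s, s) (c, 1)) :=
      hcs_time (hDs (c, 1)) y c
    have hint : IntegrableOn (fun s : ℝ => fderiv ℝ φ (y + c * s, s) (c, 1)) (Ioi 0) :=
      (hkc.integrable_of_hasCompactSupport hks).integrableOn
    have htend : Tendsto (fun s : ℝ => φ (y + c * s, s)) atTop (𝓝 0) := by
      have := tendsto_mul_hcs_zero (f := fun _ : ℝ => (1:ℝ)) (hcs_time h2φ y c)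
        atTop_le_cocompact
      simpa using this
    have h0 : φ (y + c * 0, 0) = 0 := by
      apply image_eq_zero_of_notMem_tsupport
      intro h
      have := hsupp h
      simp at this
    have := integral_Ioi_of_hasDerivAt_of_tendsto (a := 0)
      hcont.continuousWithinAt (fun s _ => htimeD y s) hint htend
    rw [this]
    simpa using h0
  have hz : ∀ y : ℝ, (∫ t in Ioi (0:ℝ), U y * fderiv ℝ φ (y + c * t, t) (c, 1)) = 0 := by
    intro y
    rw [MeasureTheory.integral_const_mul, inner0 y, mul_zero]
  simp_rw [hz, integral_zero]
end
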